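/- Fix t ≥ 1 and let G be a graph with no K_{t,t} subgraph. Then there do not exist vertices a₁,…,a_{3t} and b₁,…,b_{3t} such that for all i > j, aᵢ and bⱼ are equal or adjacent, and for all i, aᵢ and bᵢ are distinct and non-adjacent. That is, the semi-ladder index of the closed-neighborhood relation δ₁(G) is strictly less than 3t. -/

import Mathlib

/-- `G` is `K_{t,t}`-free: there are no disjoint vertex sets `A`, `B` of size `t` each
with every vertex of `A` adjacent to every vertex of `B`. -/
def KttFree {V : Type*} (G : SimpleGraph V) (t : ℕ) : Prop :=
  ¬ ∃ (A B : Finset V), Disjoint A B ∧ A.card = t ∧ B.card = t ∧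
      ∀ a ∈ A, ∀ b ∈ B, G.Adj a b

/-!
Split the ladder into the first `t` rungs `J` and the last `2t` rungs `K`, and put
`B = b(J)`. Since `a` is injective, at most `t` of the `a k` with `k ∈ K` lie in `B`;
every other `a k` is distinct from, hence adjacent to, every `b j` with `j ∈ J`.
This yields a `K_{t,t}` between `t` of those `a k` and `B`.
-/

open Finset

def IsSemiLadder {ι α β : Type*} [LinearOrder ι] (R : α → β → Prop) (a : ι → α) (b : ι → β) :
    Prop :=
  (∀ i j, j < i → R (a i) (b j)) ∧ ∀ i, ¬ R (a i) (b i)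

namespace IsSemiLadder

variable {ι α β : Type*} [LinearOrder ι] {R : α → β → Prop} {a : ι → α} {b : ι → β}

theorem injective_left (h : IsSemiLadder R a b) : Function.Injective a := by
  intro i j hij
  by_contra hne
  rcases lt_or_gt_of_ne hne with hlt | hlt
  · exact h.2 i (hij ▸ h.1 j i hlt)
  · exact h.2 j (hij ▸ h.1 i j hlt)

theorem injective_right (h : IsSemiLadder R a b) : Function.Injective b := by
  intro i j hij
  by_contra hne
  rcases lt_or_gt_of_ne hne with hlt | hlt
  · exact h.2 j (hij ▸ h.1 j i hlt)
  · exact h.2 i (hij ▸ h.1 i j hlt)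

end IsSemiLadder

namespace SimpleGraph

variable {V : Type*} (G : SimpleGraph V)

/-- The relation `δ₁(G)`. -/
def ClosedAdj (x y : V) : Prop := x = y ∨ G.Adj x y

theorem not_kttFree_of_le_card {t : ℕ} {A B : Finset V} (hAB : Disjoint A B)
    (hA : t ≤ #A) (hB : t ≤ #B) (hadj : ∀ x ∈ A, ∀ y ∈ B, G.Adj x y) : ¬ KttFree G t := by
  obtain ⟨A', hA'A, hA'⟩ := exists_subset_card_eq hA
  obtain ⟨B', hB'B, hB'⟩ := exists_subset_card_eq hB
  exact fun hG => hG ⟨A', B', hAB.mono hA'A hB'B, hA', hB',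
    fun x hx y hy => hadj x (hA'A hx) y (hB'B hy)⟩

end SimpleGraph

theorem IsSemiLadder.not_kttFree {ι V : Type*} [LinearOrder ι] {G : SimpleGraph V}
    {a b : ι → V} (hab : IsSemiLadder G.ClosedAdj a b) {J K : Finset ι}
    (hJK : ∀ j ∈ J, ∀ k ∈ K, j < k) {t : ℕ} (hJ : t ≤ #J) (hK : #J + t ≤ #K) :
    ¬ KttFree G t := by
  classical
  set B := J.image b
  set A := {k ∈ K | a k ∉ B}.image a
  have hB : #B = #J := card_image_of_injective _ hab.injective_right
  have hInB : #{k ∈ K | a k ∈ B} ≤ #B :=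
    card_le_card_of_injOn a (fun k hk => (mem_filter.1 hk).2) hab.injective_left.injOn
  have hA : #A + #{k ∈ K | a k ∈ B} = #K := by
    rw [card_image_of_injective _ hab.injective_left, add_comm, card_filter_add_card_filter_not]
  refine G.not_kttFree_of_le_card (A := A) (B := B) ?_ (by omega) (by omega) ?_
  · refine Finset.disjoint_left.2 ?_
    simp only [A, mem_image, mem_filter]
    rintro _ ⟨k, ⟨-, hkB⟩, rfl⟩
    exact hkB
  · simp only [A, B, mem_image, mem_filter]
    rintro _ ⟨k, ⟨hk, hkB⟩, rfl⟩ _ ⟨j, hj, rfl⟩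
    exact (hab.1 k j (hJK j hj k hk)).resolve_left fun h => hkB ⟨j, hj, h.symm⟩

theorem kttFree_no_semiLadder_general {V : Type*} (G : SimpleGraph V) (t : ℕ)
    (hG : KttFree G t) :
    ¬ ∃ (a b : Fin (3 * t) → V),
        (∀ i j, j < i → (a i = b j ∨ G.Adj (a i) (b j))) ∧
        (∀ i, ¬ (a i = b i ∨ G.Adj (a i) (b i))) := by
  classical
  rintro ⟨a, b, hab : IsSemiLadder G.ClosedAdj a b⟩
  have hJ : #{i : Fin (3 * t) | i < t} = t := by rw [Fin.card_filter_val_lt]; omega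
  have hK : #{i : Fin (3 * t) | ¬ i < t} = 2 * t := by
    have := card_filter_add_card_filter_not (s := univ) (p := fun i : Fin (3 * t) => i < t)
    rw [card_univ, Fintype.card_fin] at this
    omega
  refine hab.not_kttFree (J := {i | i < t}) (K := {i | ¬ i < t}) ?_ hJ.ge (by omega) hG
  simp only [mem_filter, mem_univ, true_and]
  exact fun j hj k hk => Fin.lt_def.2 (by omega)

/-- In a `K_{t,t}`-free graph, the closed-neighborhood relation `δ₁` admits no
semi-ladder of order `3t`. -/
theorem kttFree_no_semiLadder {V : Type*} (G : SimpleGraph V) (t : ℕ) (ht : 1 ≤ t)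
    (hG : KttFree G t) :
    ¬ ∃ (a b : Fin (3 * t) → V),
        (∀ i j, j < i → (a i = b j ∨ G.Adj (a i) (b j))) ∧
        (∀ i, ¬ (a i = b i ∨ G.Adj (a i) (b i))) :=
  kttFree_no_semiLadder_general G t hG
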